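/- For a signed graph G, det(L_G) = ∑_{c ∈ M^-} 2^{nc(c)}, where M^- is the set of maximal elements of the positive-circle-free activation classes of contributors of G and nc(c) is the number of negative circles in c. In particular det(L_G) ≥ 0, and det(L_G) = 0 if and only if every activation class contains a positive circle in its maximal element. -/

import Mathlib

open scoped Classical

/-- An oriented hypergraph on vertex set `V`: edges `E`, incidences `I`,
incidence function given by `vtx` and `edge`, and incidence orientations `sgn`. -/
structure OrientedHypergraph (V : Type) [Fintype V] [DecidableEq V] where
  E : Type
  I : Type
  [fintypeE : Fintype E]
  [fintypeI : Fintype I]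
  [decEqI : DecidableEq I]
  vtx : I → V
  edge : I → E
  sgn : I → ℤ

attribute [instance] OrientedHypergraph.fintypeE OrientedHypergraph.fintypeI
  OrientedHypergraph.decEqI

variable {V : Type} [Fintype V] [DecidableEq V]

/-- A bidirected graph: an oriented hypergraph in which every edge has exactly two
incidences, recorded by the fixed-point-free involution `τ` pairing the two
incidences of each edge. -/
structure Bidirected (V : Type) [Fintype V] [DecidableEq V]
    extends OrientedHypergraph V where
  τ : I → I
  τ_invol : ∀ i, τ (τ i) = i
  τ_ne : ∀ i, τ i ≠ i
  τ_edge : ∀ i, edge (τ i) = edge i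
  edge_two : ∀ i j, edge i = edge j → j = i ∨ j = τ i

/-- A pre-contributor: an incidence-preserving map of `|V|` disjoint directed paths
of length one into `G`, sending the tail `t_v` to `v`.  The component at `v` is the
weak walk with tail incidence `i1 v` and head incidence `i2 v`. -/
structure PreContributor (G : OrientedHypergraph V) where
  i1 : V → G.I
  i2 : V → G.I
  tail_eq : ∀ v, G.vtx (i1 v) = v
  edge_eq : ∀ v, G.edge (i1 v) = G.edge (i2 v)

namespace PreContributor

variable {G : OrientedHypergraph V}

/-- The head vertex of the component of `p` at `v`: `p(h_v)`. -/
def head (p : PreContributor G) (v : V) : V := G.vtx (p.i2 v)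

/-- A contributor: a pre-contributor whose heads cover `V`, `{p(h_v) | v ∈ V} = V`. -/
def IsContributor (p : PreContributor G) : Prop := Function.Surjective p.head

/-- The component of `p` at `v` is a backstep `(v,i,e,i,v)`. -/
def BackstepAt (p : PreContributor G) (v : V) : Prop := p.i2 v = p.i1 v

/-- The sign of the length-one weak walk of `p` at `v`. -/
def walkSign (p : PreContributor G) (v : V) : ℤ := -(G.sgn (p.i1 v) * G.sgn (p.i2 v))

/-- Two vertices lie in the same component of the image of `p`. -/
def compRel (p : PreContributor G) : V → V → Prop :=
  Relation.EqvGen (fun v w => p.head v = w)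

/-- The setoid of components of `p`. -/
def compSetoid (p : PreContributor G) : Setoid V := Relation.EqvGen.setoid (fun v w => p.head v = w)

/-- A component class is a (lone) backstep. -/
def IsBackstepClass (p : PreContributor G) (q : Quotient p.compSetoid) : Prop :=
  ∃ v, Quotient.mk p.compSetoid v = q ∧ p.head v = v ∧ p.BackstepAt v

/-- The number of vertices in a component class. -/
noncomputable def compCard (p : PreContributor G) (q : Quotient p.compSetoid) : ℕ :=
  Nat.card {v : V // Quotient.mk p.compSetoid v = q}

/-- The sign of a component class: the product of the signs of its weak walks. -/
noncomputable def compSign (p : PreContributor G) (q : Quotient p.compSetoid) : ℤ :=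
  ∏ᶠ v ∈ {v : V | Quotient.mk p.compSetoid v = q}, p.walkSign v

/-- `tc`: total number of circles of a contributor (backsteps do not count). -/
noncomputable def tc (p : PreContributor G) : ℕ :=
  Nat.card {q : Quotient p.compSetoid // ¬ p.IsBackstepClass q}

/-- `pc`: number of positive circles of a contributor. -/
noncomputable def pc (p : PreContributor G) : ℕ :=
  Nat.card {q : Quotient p.compSetoid // ¬ p.IsBackstepClass q ∧ p.compSign q = 1}

/-- `nc`: number of negative circles of a contributor. -/
noncomputable def nc (p : PreContributor G) : ℕ :=
  Nat.card {q : Quotient p.compSetoid // ¬ p.IsBackstepClass q ∧ p.compSign q = -1}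

/-- `oc`: number of odd circles of a contributor. -/
noncomputable def oc (p : PreContributor G) : ℕ :=
  Nat.card {q : Quotient p.compSetoid // ¬ p.IsBackstepClass q ∧ Odd (p.compCard q)}

/-- `ec`: number of even circles of a contributor. -/
noncomputable def ec (p : PreContributor G) : ℕ :=
  Nat.card {q : Quotient p.compSetoid // ¬ p.IsBackstepClass q ∧ Even (p.compCard q)}

end PreContributor

/-- The `V × E` incidence matrix of an oriented hypergraph. -/
noncomputable def OrientedHypergraph.inc (G : OrientedHypergraph V) : Matrix V G.E ℤ :=
  fun v e => ∑ᶠ i ∈ {i : G.I | G.vtx i = v ∧ G.edge i = e}, G.sgn i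

/-- The oriented hypergraphic Laplacian `L_G = H_G H_Gᵀ`. -/
noncomputable def OrientedHypergraph.lap (G : OrientedHypergraph V) : Matrix V V ℤ :=
  G.inc * G.inc.transpose

namespace Bidirected

variable {G : Bidirected V}

/-- Packing the directed adjacency of `p` at `v` into a backstep. -/
def pack (G : Bidirected V) (p : PreContributor G.toOrientedHypergraph) (v : V) :
    PreContributor G.toOrientedHypergraph where
  i1 := p.i1
  i2 := fun u => if u = v then p.i1 v else p.i2 u
  tail_eq := p.tail_eq
  edge_eq := fun u => by by_cases h : u = v <;> simp [h, p.edge_eq u]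

/-- Unpacking the backstep of `p` at `v` into the unique directed adjacency out of
`v` completing the edge. -/
def unpack (G : Bidirected V) (p : PreContributor G.toOrientedHypergraph) (v : V) :
    PreContributor G.toOrientedHypergraph where
  i1 := p.i1
  i2 := fun u => if u = v then G.τ (p.i1 v) else p.i2 u
  tail_eq := p.tail_eq
  edge_eq := fun u => by
    by_cases h : u = v
    · simp [h, G.τ_edge]
    · simp [h, p.edge_eq u]

end Bidirected
namespace Bidirected

variable {V : Type} [Fintype V] [DecidableEq V]

/-- A sequence of vertices is a valid sequence of unpackings from `p`:
each step unpacks a backstep. -/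
def UnpackSeqOK (G : Bidirected V) :
    PreContributor G.toOrientedHypergraph → List V → Prop
  | _, [] => True
  | p, v :: l => p.BackstepAt v ∧ UnpackSeqOK G (G.unpack p v) l

/-- A sequence of vertices is a valid sequence of packings from `p`:
each step packs a directed adjacency. -/
def PackSeqOK (G : Bidirected V) :
    PreContributor G.toOrientedHypergraph → List V → Prop
  | _, [] => True
  | p, v :: l => ¬ p.BackstepAt v ∧ PackSeqOK G (G.pack p v) l

/-- `d` is obtained from `c` by activating a circle: a minimal sequence of
unpackings producing a new contributor, which has one more circle. -/
def Activates (G : Bidirected V) (c d : PreContributor G.toOrientedHypergraph) : Prop :=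
  c.IsContributor ∧ d.IsContributor ∧
    ∃ l : List V, G.UnpackSeqOK c l ∧ List.foldl G.unpack c l = d ∧
      d.tc = c.tc + 1 ∧
      ∀ l' : List V, l' <+: l → l' ≠ [] → l' ≠ l →
        ¬ (List.foldl G.unpack c l').IsContributor

/-- `d` is obtained from `c` by deactivating a circle: a minimal sequence of
packings producing a new contributor, which has one fewer circle. -/
def Deactivates (G : Bidirected V) (c d : PreContributor G.toOrientedHypergraph) : Prop :=
  c.IsContributor ∧ d.IsContributor ∧
    ∃ l : List V, G.PackSeqOK c l ∧ List.foldl G.pack c l = d ∧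
      c.tc = d.tc + 1 ∧
      ∀ l' : List V, l' <+: l → l' ≠ [] → l' ≠ l →
        ¬ (List.foldl G.pack c l').IsContributor

/-- The activation partial order `≤_a`. -/
def leA (G : Bidirected V) : PreContributor G.toOrientedHypergraph →
    PreContributor G.toOrientedHypergraph → Prop :=
  Relation.ReflTransGen G.Activates

/-- Activation equivalence `~_a`; its classes are the activation classes. -/
def ActEq (G : Bidirected V) (c d : PreContributor G.toOrientedHypergraph) : Prop :=
  G.leA c d ∨ G.leA d c

/-- Two vertices are linked by an edge of `G`. -/
def linkR (G : Bidirected V) (v w : V) : Prop :=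
  ∃ i : G.I, G.vtx i = v ∧ G.vtx (G.τ i) = w

/-- Every connected component of `G` contains at least one adjacency
(an edge whose two incidences lie at two distinct vertices). -/
def EveryComponentHasAdjacency (G : Bidirected V) : Prop :=
  ∀ v : V, ∃ w : V, Relation.EqvGen G.linkR v w ∧
    ∃ i : G.I, G.vtx i = w ∧ G.vtx (G.τ i) ≠ w

end Bidirected


/-!
Expanding `det (H Hᵀ)` over permutations, every term is a pre-contributor whose heads form
a permutation `σ`, counted with `sign σ · ∏ sgn(i₁) sgn(i₂)`; these are exactly the
contributors. A contributor is determined by its tail incidences `f` and its set of active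
circles, which can be any set of cycles of the map `v ↦ vtx (τ (f v))`, and its weight is
`∏ (-sgn C)` over its active circles. For fixed `f` the weights therefore add up to
`∏ (1 - sgn C)` over all circles, which is `2 ^ #circles` when every circle is negative and `0`
otherwise. The maximal elements of the positive-circle-free activation classes are exactly the
contributors whose circles are all active and negative, one for each such `f`.
-/

open Finset

def IsCycleOf {α : Type*} (w : α → α) (C : Finset α) : Prop :=
  C.Nonempty ∧ (∀ v ∈ C, w v ∈ C) ∧ ∀ v ∈ C, ∀ u ∈ C, ∃ n, w^[n] v = u

namespace IsCycleOf

variable {α : Type*} {w : α → α} {C D : Finset α} {u v : α}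

theorem iterate_mem (hC : IsCycleOf w C) (hv : v ∈ C) (n : ℕ) : w^[n] v ∈ C := by
  induction n with
  | zero => exact hv
  | succ n ih => rw [Function.iterate_succ_apply']; exact hC.2.1 _ ih

theorem eq_of_mem (hC : IsCycleOf w C) (hD : IsCycleOf w D) (hvC : v ∈ C) (hvD : v ∈ D) :
    C = D := by
  ext u
  constructor
  · intro hu
    obtain ⟨n, rfl⟩ := hC.2.2 v hvC u hu
    exact hD.iterate_mem hvD n
  · intro hu
    obtain ⟨n, rfl⟩ := hD.2.2 v hvD u hu
    exact hC.iterate_mem hvC n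

theorem disjoint [DecidableEq α] (hC : IsCycleOf w C) (hD : IsCycleOf w D) (hCD : C ≠ D) :
    Disjoint C D :=
  Finset.disjoint_left.2 fun _ hvC hvD => hCD (hC.eq_of_mem hD hvC hvD)

theorem exists_apply_eq (hC : IsCycleOf w C) (hu : u ∈ C) : ∃ x ∈ C, w x = u := by
  obtain ⟨m, hm⟩ := hC.2.2 (w u) (hC.2.1 u hu) u hu
  refine ⟨w^[m] u, hC.iterate_mem hu m, ?_⟩
  rw [← Function.iterate_succ_apply' w m u, Function.iterate_succ_apply, hm]

theorem apply_ne_self (hC : IsCycleOf w C) (hcard : 1 < #C) (hv : v ∈ C) : w v ≠ v := by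
  intro hfix
  have hsub : C ⊆ {v} := fun u hu => by
    obtain ⟨n, rfl⟩ := hC.2.2 v hv u hu
    rw [Function.iterate_fixed hfix n, Finset.mem_singleton]
  have := Finset.card_le_card hsub
  rw [Finset.card_singleton] at this
  omega

/-- `σ` is a `#C`-cycle with support `C`, or the identity when `#C = 1`. -/
theorem sign_eq [DecidableEq α] [Fintype α] (hC : IsCycleOf w C) {σ : Equiv.Perm α}
    (hσ : ∀ v, σ v = if v ∈ C then w v else v) : Equiv.Perm.sign σ = (-1) ^ (#C - 1) := by
  obtain ⟨v₀, hv₀⟩ := hC.1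
  have hpow : ∀ n : ℕ, (σ ^ n) v₀ = w^[n] v₀ := fun n => by
    induction n with
    | zero => rfl
    | succ n ih =>
      rw [pow_succ', Equiv.Perm.mul_apply, ih, Function.iterate_succ_apply', hσ,
        if_pos (hC.iterate_mem hv₀ n)]
  rcases Nat.lt_or_ge 1 #C with hcard | hcard
  · have hsupp : σ.support = C := by
      ext v
      rw [Equiv.Perm.mem_support, hσ]
      by_cases hv : v ∈ C
      · simp [hv, hC.apply_ne_self hcard hv]
      · simp [hv]
    have hcycle : σ.IsCycle := by
      refine ⟨v₀, by rw [hσ, if_pos hv₀]; exact hC.apply_ne_self hcard hv₀,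
        fun y hy => ?_⟩
      obtain ⟨n, rfl⟩ := hC.2.2 v₀ hv₀ y (hsupp ▸ Equiv.Perm.mem_support.2 hy)
      exact ⟨n, by rw [zpow_natCast, hpow]⟩
    rw [hcycle.sign, hsupp]
    obtain ⟨k, hk⟩ := Nat.exists_eq_add_of_lt hcard
    rw [hk, show 1 + k + 1 - 1 = 1 + k by omega, pow_succ]
    simp
  · have hσ1 : σ = 1 := by
      obtain ⟨x, rfl⟩ := Finset.card_eq_one.1 (le_antisymm hcard hC.1.card_pos)
      ext v
      have hw : w x = x := Finset.mem_singleton.1 (hC.2.1 x (Finset.mem_singleton_self x))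
      rw [hσ]
      split_ifs with hv <;> simp_all
    rw [hσ1, map_one, show #C - 1 = 0 by omega, pow_zero]

end IsCycleOf

namespace PreContributor

variable {H : OrientedHypergraph V} {p : PreContributor H} {u v : V}

theorem ext {q : PreContributor H} (h1 : p.i1 = q.i1) (h2 : p.i2 = q.i2) : p = q := by
  cases p; cases q; simp_all

noncomputable instance : Fintype (PreContributor H) :=
  Fintype.ofInjective (fun p => (p.i1, p.i2)) fun _ _ h =>
    ext (congrArg Prod.fst h) (congrArg Prod.snd h)

/-- The permutation `p.head` of a contributor; the identity if `p` is not a contributor. -/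
noncomputable def perm (p : PreContributor H) : Equiv.Perm V :=
  if h : p.IsContributor then Equiv.ofBijective p.head (Finite.surjective_iff_bijective.1 h)
  else 1

theorem coe_perm (hp : p.IsContributor) : ⇑p.perm = p.head := by
  rw [perm, dif_pos hp]
  rfl

theorem head_eq_self (h : p.BackstepAt v) : p.head v = v := by
  rw [head, h, p.tail_eq]

theorem mk_eq_mk_iff (hp : p.IsContributor) :
    Quotient.mk p.compSetoid u = Quotient.mk p.compSetoid v ↔ p.perm.SameCycle v u := by
  rw [Quotient.eq]
  change Relation.EqvGen _ u v ↔ _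
  constructor
  · intro h
    refine Equiv.Perm.SameCycle.symm ?_
    induction h with
    | rel a b hab => exact ⟨1, by rw [zpow_one, coe_perm hp, hab]⟩
    | refl => exact Equiv.Perm.SameCycle.refl _ _
    | symm _ _ _ ih => exact ih.symm
    | trans _ _ _ _ _ ih₁ ih₂ => exact ih₁.trans ih₂
  · intro h
    obtain ⟨n, rfl⟩ := h.exists_nat_pow_eq
    clear h
    refine Relation.EqvGen.symm _ _ ?_
    induction n with
    | zero => exact Relation.EqvGen.refl _
    | succ n ih =>
      refine ih.trans _ _ _ (Relation.EqvGen.rel _ _ ?_)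
      rw [pow_succ', Equiv.Perm.mul_apply, coe_perm hp]

theorem isBackstepClass_mk_iff (hp : p.IsContributor) :
    p.IsBackstepClass (Quotient.mk p.compSetoid v) ↔ p.BackstepAt v := by
  refine ⟨fun ⟨u, hu, hfix, hb⟩ => ?_, fun h => ⟨v, rfl, head_eq_self h, h⟩⟩
  have huv : v = u := ((mk_eq_mk_iff hp).1 hu).eq_of_right <| by
    rw [Function.IsFixedPt, coe_perm hp, hfix]
  rwa [huv]

noncomputable def compFinset (p : PreContributor H) (q : Quotient p.compSetoid) : Finset V :=
  univ.filter fun u => Quotient.mk p.compSetoid u = q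

theorem mem_compFinset {q : Quotient p.compSetoid} :
    u ∈ p.compFinset q ↔ Quotient.mk p.compSetoid u = q := by
  simp [compFinset]

theorem compFinset_injective : Function.Injective p.compFinset := by
  intro q q' h
  induction q using Quotient.inductionOn with
  | h v => exact mem_compFinset.1 (h ▸ mem_compFinset.2 rfl)

noncomputable def weight (p : PreContributor H) : ℤ :=
  (Equiv.Perm.sign p.perm : ℤ) * ∏ v, H.sgn (p.i1 v) * H.sgn (p.i2 v)

end PreContributor

namespace OrientedHypergraph

open PreContributor

variable (H : OrientedHypergraph V)

noncomputable def incPairs (a b : V) : Finset (H.I × H.I) :=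
  univ.filter fun x => H.vtx x.1 = a ∧ H.vtx x.2 = b ∧ H.edge x.1 = H.edge x.2

theorem lap_apply (a b : V) :
    H.lap a b = ∑ x ∈ H.incPairs a b, H.sgn x.1 * H.sgn x.2 := by
  have hinc : ∀ v e, H.inc v e = ∑ i ∈ univ.filter (fun i => H.vtx i = v ∧ H.edge i = e),
      H.sgn i := fun v e => by
    rw [inc, ← finsum_mem_coe_finset, coe_filter]
    simp
  have hfiber : ∀ e, (H.incPairs a b).filter (fun x => H.edge x.1 = e) =
      univ.filter (fun i => H.vtx i = a ∧ H.edge i = e) ×ˢ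
        univ.filter (fun j => H.vtx j = b ∧ H.edge j = e) := fun e => by
    ext x
    simp only [incPairs, mem_filter, mem_product, mem_univ, true_and]
    grind
  rw [lap, Matrix.mul_apply, ← sum_fiberwise_of_maps_to (g := fun x : H.I × H.I => H.edge x.1)
    (t := univ) fun _ _ => mem_univ _]
  refine sum_congr rfl fun e _ => ?_
  rw [Matrix.transpose_apply, hfiber, hinc, hinc, sum_mul_sum, sum_product]

theorem prod_lap_apply (σ : Equiv.Perm V) :
    ∏ v, H.lap (σ v) v = ∑ p ∈ univ.filter (fun p : PreContributor H => p.head = ⇑σ),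
      ∏ v, H.sgn (p.i1 v) * H.sgn (p.i2 v) := by
  simp_rw [lap_apply, prod_univ_sum]
  refine sum_bij'
    (fun g hg => ⟨fun v => (g v).2, fun v => (g v).1,
      fun v => ((mem_filter.1 (Fintype.mem_piFinset.1 hg v)).2).2.1,
      fun v => ((mem_filter.1 (Fintype.mem_piFinset.1 hg v)).2).2.2.symm⟩)
    (fun p _ v => (p.i2 v, p.i1 v)) ?_ ?_ (fun _ _ => rfl) (fun _ _ => rfl) ?_
  · intro g hg
    simp only [mem_filter, mem_univ, true_and]
    exact funext fun v => ((mem_filter.1 (Fintype.mem_piFinset.1 hg v)).2).1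
  · intro p hp
    simp only [mem_filter, mem_univ, true_and] at hp
    simp only [Fintype.mem_piFinset, incPairs, mem_filter, mem_univ, true_and]
    exact fun v => ⟨congrFun hp v, p.tail_eq v, (p.edge_eq v).symm⟩
  · exact fun g _ => prod_congr rfl fun v _ => mul_comm _ _

theorem det_lap_eq_sum_weight :
    H.lap.det = ∑ p ∈ univ.filter (fun p : PreContributor H => p.IsContributor), p.weight := by
  have hσ : ∀ p : PreContributor H, ∀ σ : Equiv.Perm V,
      p.head = ⇑σ ↔ p.IsContributor ∧ p.perm = σ := fun p σ => by
    refine ⟨fun h => ?_, fun ⟨hp, h⟩ => by rw [← coe_perm hp, h]⟩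
    have hp : p.IsContributor := by rw [IsContributor, h]; exact σ.surjective
    exact ⟨hp, Equiv.coe_fn_injective ((coe_perm hp).trans h)⟩
  rw [Matrix.det_apply]
  simp_rw [prod_lap_apply, Units.smul_def, smul_sum, sum_filter]
  rw [sum_comm]
  refine sum_congr rfl fun p _ => ?_
  simp_rw [hσ, ite_and]
  split_ifs with hp
  · rw [sum_ite_eq, if_pos (mem_univ _), weight, smul_eq_mul]
  · exact sum_const_zero

end OrientedHypergraph

namespace Bidirected

open PreContributor

variable (G : Bidirected V)

def next (f : V → G.I) (v : V) : V := G.vtx (G.τ (f v))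

noncomputable def circles (f : V → G.I) : Finset (Finset V) :=
  univ.filter (IsCycleOf (G.next f))

noncomputable def circleSign (f : V → G.I) (C : Finset V) : ℤ :=
  ∏ v ∈ C, -(G.sgn (f v) * G.sgn (G.τ (f v)))

def AllCirclesNegative (f : V → G.I) : Prop :=
  ∀ C ∈ G.circles f, G.circleSign f C = -1

abbrev Tails : Type := {f : V → G.I // ∀ v, G.vtx (f v) = v}

def tails (p : PreContributor G.toOrientedHypergraph) : G.Tails := ⟨p.i1, p.tail_eq⟩

noncomputable def activeCircles (p : PreContributor G.toOrientedHypergraph) :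
    Finset (Finset V) :=
  (G.circles p.i1).filter fun C => ∀ v ∈ C, ¬ p.BackstepAt v

noncomputable def ofCircles (t : G.Tails) (A : Finset (Finset V)) :
    PreContributor G.toOrientedHypergraph where
  i1 := t.1
  i2 v := if v ∈ A.biUnion id then G.τ (t.1 v) else t.1 v
  tail_eq := t.2
  edge_eq v := by split_ifs <;> simp [G.τ_edge]

/-- `c` belongs to `M⁻`: it is the maximal element of a positive-circle-free activation class. -/
def IsMaxOfNegClass (c : PreContributor G.toOrientedHypergraph) : Prop :=
  c.IsContributor ∧ (¬ ∃ d, G.Activates c d) ∧ ∀ d, G.ActEq c d → pc d = 0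

variable {G} {p c d : PreContributor G.toOrientedHypergraph} {f : V → G.I} {t : G.Tails}
  {A : Finset (Finset V)} {C : Finset V} {l : List V} {u v : V}

theorem mem_circles : C ∈ G.circles f ↔ IsCycleOf (G.next f) C := by
  simp [circles]

theorem mem_activeCircles :
    C ∈ G.activeCircles p ↔ IsCycleOf (G.next p.i1) C ∧ ∀ v ∈ C, ¬ p.BackstepAt v := by
  simp [activeCircles, mem_circles]

theorem activeCircles_subset (p : PreContributor G.toOrientedHypergraph) :
    G.activeCircles p ⊆ G.circles p.i1 :=
  filter_subset _ _

theorem i2_eq_or (p : PreContributor G.toOrientedHypergraph) (v : V) :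
    p.i2 v = p.i1 v ∨ p.i2 v = G.τ (p.i1 v) :=
  G.edge_two _ _ (p.edge_eq v)

theorem i2_eq_τ (h : ¬ p.BackstepAt v) : p.i2 v = G.τ (p.i1 v) :=
  (i2_eq_or p v).resolve_left h

theorem head_eq_next (h : ¬ p.BackstepAt v) : p.head v = G.next p.i1 v := by
  rw [head, i2_eq_τ h, next]

theorem not_backstepAt_perm (hp : p.IsContributor) (h : ¬ p.BackstepAt v) :
    ¬ p.BackstepAt (p.perm v) := fun hb => by
  have hfix : p.perm (p.perm v) = p.perm v := by
    have := head_eq_self hb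
    rwa [coe_perm hp] at this ⊢
  exact h (p.perm.injective hfix ▸ hb)

theorem perm_pow_apply (hp : p.IsContributor) (h : ¬ p.BackstepAt v) (n : ℕ) :
    (p.perm ^ n) v = (G.next p.i1)^[n] v ∧ ¬ p.BackstepAt ((p.perm ^ n) v) := by
  induction n with
  | zero => exact ⟨rfl, h⟩
  | succ n ih =>
    have hstep : p.perm ((p.perm ^ n) v) = G.next p.i1 ((p.perm ^ n) v) := by
      rw [coe_perm hp, head_eq_next ih.2]
    rw [pow_succ', Equiv.Perm.mul_apply, Function.iterate_succ_apply', ← ih.1, hstep]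
    exact ⟨rfl, hstep ▸ not_backstepAt_perm hp ih.2⟩

theorem mem_compFinset_mk (hp : p.IsContributor) :
    u ∈ p.compFinset (Quotient.mk p.compSetoid v) ↔ ∃ n : ℕ, (p.perm ^ n) v = u := by
  rw [mem_compFinset, mk_eq_mk_iff hp]
  exact ⟨Equiv.Perm.SameCycle.exists_nat_pow_eq,
    fun ⟨n, h⟩ => ⟨n, by rwa [zpow_natCast]⟩⟩

theorem compFinset_mem_activeCircles (hp : p.IsContributor) (hv : ¬ p.BackstepAt v) :
    p.compFinset (Quotient.mk p.compSetoid v) ∈ G.activeCircles p := by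
  simp only [mem_activeCircles, IsCycleOf, mem_compFinset_mk hp]
  refine ⟨⟨⟨v, (mem_compFinset_mk hp).2 ⟨0, rfl⟩⟩, ?_, ?_⟩, ?_⟩
  · rintro _ ⟨n, rfl⟩
    refine ⟨n + 1, ?_⟩
    rw [(perm_pow_apply hp hv _).1, (perm_pow_apply hp hv _).1,
      Function.iterate_succ_apply']
  · rintro _ ⟨n, rfl⟩ _ ⟨m, rfl⟩
    obtain ⟨k, hk⟩ := Equiv.Perm.SameCycle.exists_nat_pow_eq
      (f := p.perm) (x := (p.perm ^ n) v) (y := (p.perm ^ m) v)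
      ((Equiv.Perm.sameCycle_pow_left.2 (Equiv.Perm.SameCycle.refl _ _)).trans
        (Equiv.Perm.sameCycle_pow_right.2 (Equiv.Perm.SameCycle.refl _ _)))
    exact ⟨k, by rw [← hk, (perm_pow_apply hp (perm_pow_apply hp hv n).2 k).1]⟩
  · rintro _ ⟨n, rfl⟩
    exact (perm_pow_apply hp hv n).2

theorem eq_compFinset_mk (hp : p.IsContributor) (hC : C ∈ G.activeCircles p) (hv : v ∈ C) :
    C = p.compFinset (Quotient.mk p.compSetoid v) :=
  have hv' := (mem_activeCircles.1 hC).2 v hv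
  (mem_activeCircles.1 hC).1.eq_of_mem
    (mem_activeCircles.1 (compFinset_mem_activeCircles hp hv')).1 hv
    ((mem_compFinset_mk hp).2 ⟨0, rfl⟩)

theorem compSign_mk (hp : p.IsContributor) (hv : ¬ p.BackstepAt v) :
    p.compSign (Quotient.mk p.compSetoid v) =
      G.circleSign p.i1 (p.compFinset (Quotient.mk p.compSetoid v)) := by
  have hset : {u | Quotient.mk p.compSetoid u = Quotient.mk p.compSetoid v} =
      ↑(p.compFinset (Quotient.mk p.compSetoid v)) := by
    ext u
    simp [mem_compFinset]
  rw [compSign, hset, finprod_mem_coe_finset]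
  refine prod_congr rfl fun u hu => ?_
  rw [walkSign, i2_eq_τ ((mem_activeCircles.1 (compFinset_mem_activeCircles hp hv)).2 u hu)]

theorem card_compClasses (hp : p.IsContributor) (φ : ℤ → Prop) [DecidablePred φ] :
    Nat.card {q : Quotient p.compSetoid // ¬ p.IsBackstepClass q ∧ φ (p.compSign q)} =
      #((G.activeCircles p).filter fun C => φ (G.circleSign p.i1 C)) := by
  have hmem : ∀ q : Quotient p.compSetoid, ¬ p.IsBackstepClass q → φ (p.compSign q) →
      p.compFinset q ∈ (G.activeCircles p).filter fun C => φ (G.circleSign p.i1 C) := by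
    intro q
    induction q using Quotient.inductionOn with
    | h v =>
      intro hb hφ
      rw [isBackstepClass_mk_iff hp] at hb
      rw [compSign_mk hp hb] at hφ
      exact mem_filter.2 ⟨compFinset_mem_activeCircles hp hb, hφ⟩
  rw [← Fintype.card_coe, ← Nat.card_eq_fintype_card]
  refine Nat.card_eq_of_bijective (fun q => ⟨p.compFinset q.1, hmem q.1 q.2.1 q.2.2⟩)
    ⟨fun q q' h => Subtype.ext (compFinset_injective (congrArg Subtype.val h)), ?_⟩
  rintro ⟨C, hC⟩
  obtain ⟨hCa, hφ⟩ := mem_filter.1 hC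
  obtain ⟨v, hv⟩ := (mem_activeCircles.1 hCa).1.1
  have hnb := (mem_activeCircles.1 hCa).2 v hv
  have hCv := eq_compFinset_mk hp hCa hv
  refine ⟨⟨Quotient.mk p.compSetoid v, (isBackstepClass_mk_iff hp).not.2 hnb, ?_⟩,
    Subtype.ext hCv.symm⟩
  rwa [compSign_mk hp hnb, ← hCv]

theorem tc_eq (hp : p.IsContributor) : p.tc = #(G.activeCircles p) := by
  rw [tc, ← filter_true (G.activeCircles p), ← card_compClasses hp fun _ => True]
  simp

theorem pc_eq (hp : p.IsContributor) :
    p.pc = #((G.activeCircles p).filter fun C => G.circleSign p.i1 C = 1) :=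
  card_compClasses hp (· = 1)

theorem nc_eq (hp : p.IsContributor) :
    p.nc = #((G.activeCircles p).filter fun C => G.circleSign p.i1 C = -1) :=
  card_compClasses hp (· = -1)

theorem backstepAt_ofCircles : (G.ofCircles t A).BackstepAt v ↔ v ∉ A.biUnion id := by
  change (if v ∈ A.biUnion id then G.τ (t.1 v) else t.1 v) = t.1 v ↔ _
  split_ifs with h <;> simp [h, G.τ_ne]

theorem head_ofCircles :
    (G.ofCircles t A).head v = if v ∈ A.biUnion id then G.next t v else v := by
  change G.vtx (if v ∈ A.biUnion id then G.τ (t.1 v) else t.1 v) = _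
  split_ifs
  · rfl
  · exact t.2 v

theorem isContributor_ofCircles (hA : A ⊆ G.circles t) : (G.ofCircles t A).IsContributor := by
  intro u
  by_cases hu : u ∈ A.biUnion id
  · obtain ⟨C, hC, huC⟩ := mem_biUnion.1 hu
    obtain ⟨x, hx, rfl⟩ := (mem_circles.1 (hA hC)).exists_apply_eq huC
    exact ⟨x, by rw [head_ofCircles, if_pos (mem_biUnion.2 ⟨C, hC, hx⟩)]⟩
  · exact ⟨u, by rw [head_ofCircles, if_neg hu]⟩

theorem activeCircles_ofCircles (hA : A ⊆ G.circles t) :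
    G.activeCircles (G.ofCircles t A) = A := by
  ext C
  simp only [mem_activeCircles, backstepAt_ofCircles, not_not]
  refine ⟨fun ⟨hC, hmem⟩ => ?_, fun hC => ⟨mem_circles.1 (hA hC), fun v hv =>
    mem_biUnion.2 ⟨C, hC, hv⟩⟩⟩
  obtain ⟨v, hv⟩ := hC.1
  obtain ⟨D, hD, hvD⟩ := mem_biUnion.1 (hmem v hv)
  rwa [hC.eq_of_mem (mem_circles.1 (hA hD)) hv hvD]

theorem mem_biUnion_activeCircles (hp : p.IsContributor) :
    v ∈ (G.activeCircles p).biUnion id ↔ ¬ p.BackstepAt v := by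
  simp only [mem_biUnion, id]
  exact ⟨fun ⟨C, hC, hv⟩ => (mem_activeCircles.1 hC).2 v hv, fun h =>
    ⟨_, compFinset_mem_activeCircles hp h, (mem_compFinset_mk hp).2 ⟨0, rfl⟩⟩⟩

theorem ofCircles_activeCircles (hp : p.IsContributor) :
    G.ofCircles (G.tails p) (G.activeCircles p) = p := by
  refine ext rfl (funext fun v => ?_)
  change (if v ∈ (G.activeCircles p).biUnion id then _ else _) = _
  by_cases h : p.BackstepAt v
  · rw [if_neg ((mem_biUnion_activeCircles hp).not.2 (not_not.2 h))]
    exact h.symm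
  · rw [if_pos ((mem_biUnion_activeCircles hp).2 h)]
    exact (i2_eq_τ h).symm

theorem sign_perm_ofCircles (hA : A ⊆ G.circles t) :
    Equiv.Perm.sign (G.ofCircles t A).perm = ∏ C ∈ A, (-1) ^ (#C - 1) := by
  induction A using Finset.induction_on with
  | empty =>
    have hperm : (G.ofCircles t ∅).perm = 1 := Equiv.ext fun v => by
      rw [coe_perm (isContributor_ofCircles hA), head_ofCircles]
      simp
    rw [hperm, map_one, prod_empty]
  | insert C A hCA ih =>
    obtain ⟨hC, hA'⟩ := insert_subset_iff.1 hA
    have hCcyc := mem_circles.1 hC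
    have hdisj : ∀ u ∈ C, u ∉ A.biUnion id := fun u hu h => by
      obtain ⟨D, hD, huD⟩ := mem_biUnion.1 h
      exact hCA (hCcyc.eq_of_mem (mem_circles.1 (hA' hD)) hu huD ▸ hD)
    set σ := (G.ofCircles t A).perm⁻¹ * (G.ofCircles t (insert C A)).perm
    have hσ : ∀ v, σ v = if v ∈ C then G.next t v else v := fun v => by
      rw [Equiv.Perm.mul_apply, Equiv.Perm.inv_eq_iff_eq, coe_perm (isContributor_ofCircles hA),
        coe_perm (isContributor_ofCircles hA'), head_ofCircles, head_ofCircles]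
      by_cases hv : v ∈ C
      · simp [hv, hdisj _ (hCcyc.2.1 v hv)]
      · simp [hv]
    rw [prod_insert hCA, ← ih hA', ← hCcyc.sign_eq hσ, mul_comm, ← map_mul,
      mul_inv_cancel_left]

theorem prod_sgn_ofCircles (hsgn : ∀ i, G.sgn i = 1 ∨ G.sgn i = -1) (hA : A ⊆ G.circles t) :
    ∏ v, G.sgn ((G.ofCircles t A).i1 v) * G.sgn ((G.ofCircles t A).i2 v) =
      ∏ C ∈ A, ∏ v ∈ C, G.sgn (t.1 v) * G.sgn (G.τ (t.1 v)) := by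
  have hdisj : (A : Set (Finset V)).PairwiseDisjoint id := fun C hC D hD hCD =>
    (mem_circles.1 (hA hC)).disjoint (mem_circles.1 (hA hD)) hCD
  calc _ = ∏ v, if v ∈ A.biUnion id then G.sgn (t.1 v) * G.sgn (G.τ (t.1 v)) else 1 := by
        refine prod_congr rfl fun v _ => ?_
        change G.sgn (t.1 v) * G.sgn (if _ then _ else _) = _
        split_ifs
        · rfl
        · rcases hsgn (t.1 v) with h | h <;> rw [h] <;> norm_num
    _ = ∏ v ∈ A.biUnion id, G.sgn (t.1 v) * G.sgn (G.τ (t.1 v)) := by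
        rw [prod_ite_mem, univ_inter]
    _ = _ := prod_biUnion hdisj

theorem weight_ofCircles (hsgn : ∀ i, G.sgn i = 1 ∨ G.sgn i = -1) (hA : A ⊆ G.circles t) :
    (G.ofCircles t A).weight = ∏ C ∈ A, -G.circleSign t C := by
  rw [weight, sign_perm_ofCircles hA, prod_sgn_ofCircles hsgn hA]
  push_cast
  rw [← prod_mul_distrib]
  refine prod_congr rfl fun C hC => ?_
  obtain ⟨k, hk⟩ := Nat.exists_eq_add_of_lt (mem_circles.1 (hA hC)).1.card_pos
  rw [circleSign, prod_neg, hk, show 0 + k + 1 - 1 = k by omega, pow_succ]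
  ring

theorem circleSign_eq_one_or (hsgn : ∀ i, G.sgn i = 1 ∨ G.sgn i = -1) (C : Finset V) :
    G.circleSign f C = 1 ∨ G.circleSign f C = -1 := by
  refine prod_induction _ (fun z => z = 1 ∨ z = -1) ?_ (Or.inl rfl) fun v _ => ?_
  · rintro a b (rfl | rfl) (rfl | rfl) <;> norm_num
  · rcases hsgn (f v) with h | h <;> rcases hsgn (G.τ (f v)) with h' | h' <;> simp [h, h']

theorem prod_one_sub_circleSign (hsgn : ∀ i, G.sgn i = 1 ∨ G.sgn i = -1) (f : V → G.I) :
    ∏ C ∈ G.circles f, (1 - G.circleSign f C) =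
      if G.AllCirclesNegative f then 2 ^ #(G.circles f) else 0 := by
  split_ifs with hneg
  · rw [prod_congr rfl fun C hC => by rw [hneg C hC], prod_const]
    norm_num
  · obtain ⟨C, hC, hne⟩ := not_forall₂.1 hneg
    exact prod_eq_zero hC (by rw [(circleSign_eq_one_or hsgn C).resolve_right hne, sub_self])

theorem sum_weight_eq (hsgn : ∀ i, G.sgn i = 1 ∨ G.sgn i = -1) :
    ∑ p ∈ univ.filter (fun p : PreContributor G.toOrientedHypergraph => p.IsContributor),
      p.weight = ∑ f : G.Tails, ∏ C ∈ G.circles f, (1 - G.circleSign f C) := by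
  simp_rw [sub_eq_add_neg, prod_one_add]
  rw [sum_sigma']
  refine sum_nbij' (fun p => ⟨G.tails p, G.activeCircles p⟩) (fun x => G.ofCircles x.1 x.2)
    ?_ ?_ ?_ ?_ ?_
  · intro p _
    exact mem_sigma.2 ⟨mem_univ _, mem_powerset.2 (activeCircles_subset p)⟩
  · intro x hx
    simpa using isContributor_ofCircles (mem_powerset.1 (mem_sigma.1 hx).2)
  · intro p hp
    exact ofCircles_activeCircles (mem_filter.1 hp).2
  · rintro ⟨f, A⟩ hx
    rw [activeCircles_ofCircles (mem_powerset.1 (mem_sigma.1 hx).2)]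
    rfl
  · intro p hp
    conv_lhs => rw [← ofCircles_activeCircles (mem_filter.1 hp).2]
    exact weight_ofCircles hsgn (activeCircles_subset p)

theorem det_lap_eq (hsgn : ∀ i, G.sgn i = 1 ∨ G.sgn i = -1) :
    G.lap.det = ∑ f ∈ univ.filter (fun f : G.Tails => G.AllCirclesNegative f),
      2 ^ #(G.circles f) := by
  rw [OrientedHypergraph.det_lap_eq_sum_weight, sum_weight_eq hsgn, sum_filter]
  exact sum_congr rfl fun f _ => prod_one_sub_circleSign hsgn f

theorem foldl_unpack_i1 (c : PreContributor G.toOrientedHypergraph) (l : List V) :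
    (l.foldl G.unpack c).i1 = c.i1 := by
  induction l generalizing c with
  | nil => rfl
  | cons v l ih => exact ih _

theorem foldl_unpack_i2 (c : PreContributor G.toOrientedHypergraph) (l : List V) :
    (l.foldl G.unpack c).i2 = fun v => if v ∈ l then G.τ (c.i1 v) else c.i2 v := by
  induction l generalizing c with
  | nil => simp
  | cons u l ih =>
    rw [List.foldl_cons, ih]
    funext v
    change (if v ∈ l then G.τ (c.i1 v) else if v = u then G.τ (c.i1 u) else c.i2 v) = _
    by_cases h : v = u <;> simp [h]

theorem backstepAt_foldl_unpack :
    (l.foldl G.unpack c).BackstepAt v ↔ v ∉ l ∧ c.BackstepAt v := by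
  rw [BackstepAt, foldl_unpack_i1, foldl_unpack_i2]
  by_cases h : v ∈ l <;> simp [h, G.τ_ne, BackstepAt]

theorem unpackSeqOK_of_forall_backstepAt (hl : l.Nodup) (h : ∀ v ∈ l, c.BackstepAt v) :
    G.UnpackSeqOK c l := by
  induction l generalizing c with
  | nil => trivial
  | cons v l ih =>
    obtain ⟨hv, hl⟩ := List.nodup_cons.1 hl
    refine ⟨h v List.mem_cons_self, ih hl fun u hu => ?_⟩
    exact (backstepAt_foldl_unpack (l := [v])).2
      ⟨by simpa using (ne_of_mem_of_not_mem hu hv), h u (List.mem_cons_of_mem v hu)⟩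

theorem Activates.mono (h : G.Activates c d) :
    d.i1 = c.i1 ∧ G.activeCircles c ⊆ G.activeCircles d := by
  obtain ⟨-, -, l, -, rfl, -⟩ := h
  refine ⟨foldl_unpack_i1 c l, fun C hC => ?_⟩
  rw [mem_activeCircles] at hC ⊢
  rw [foldl_unpack_i1]
  exact ⟨hC.1, fun v hv hb => hC.2 v hv (backstepAt_foldl_unpack.1 hb).2⟩

theorem leA.mono (h : G.leA c d) : d.i1 = c.i1 ∧ G.activeCircles c ⊆ G.activeCircles d := by
  induction h with
  | refl => exact ⟨rfl, subset_rfl⟩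
  | tail _ hact ih => exact ⟨hact.mono.1.trans ih.1, ih.2.trans hact.mono.2⟩

theorem isContributor_of_leA (h : G.leA c d) (hd : d.IsContributor) : c.IsContributor := by
  rcases Relation.ReflTransGen.cases_head h with rfl | ⟨_, hact, -⟩
  exacts [hd, hact.1]

theorem forall_backstepAt_of_not_mem_activeCircles (hc : c.IsContributor)
    (hC : C ∈ G.circles c.i1) (hCn : C ∉ G.activeCircles c) : ∀ v ∈ C, c.BackstepAt v := by
  intro v hv
  by_contra hnb
  have hCv : C = c.compFinset (Quotient.mk c.compSetoid v) :=
    (mem_circles.1 hC).eq_of_mem (mem_activeCircles.1 (compFinset_mem_activeCircles hc hnb)).1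
      hv ((mem_compFinset_mk hc).2 ⟨0, rfl⟩)
  exact hCn (hCv ▸ compFinset_mem_activeCircles hc hnb)

theorem foldl_unpack_toList (hc : c.IsContributor) :
    C.toList.foldl G.unpack c = G.ofCircles (G.tails c) (insert C (G.activeCircles c)) := by
  refine ext (foldl_unpack_i1 c _) (funext fun v => ?_)
  rw [foldl_unpack_i2]
  change _ = if v ∈ (insert C (G.activeCircles c)).biUnion id then G.τ (c.i1 v) else c.i1 v
  simp only [biUnion_insert, mem_union, id, mem_biUnion_activeCircles hc, mem_toList]
  by_cases hv : v ∈ C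
  · simp [hv]
  by_cases hb : c.BackstepAt v
  · simp [hv, hb, show c.i2 v = c.i1 v from hb]
  · simp [hv, hb, i2_eq_τ hb]

/-- Unpacked vertices are not backsteps, and the non-backsteps of a contributor are closed
under `next`. -/
theorem subset_of_isContributor_foldl_unpack (hC : C ∈ G.circles c.i1)
    (hb : ∀ v ∈ C, c.BackstepAt v) (hq : (l.foldl G.unpack c).IsContributor) (hv : v ∈ l)
    (hvC : v ∈ C) : ∀ u ∈ C, u ∈ l := by
  intro u hu
  obtain ⟨n, rfl⟩ := (mem_circles.1 hC).2.2 v hvC u hu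
  have hnb : ¬ (l.foldl G.unpack c).BackstepAt v := fun h => (backstepAt_foldl_unpack.1 h).1 hv
  have := perm_pow_apply hq hnb n
  rw [foldl_unpack_i1] at this
  rw [← this.1] at hu ⊢
  by_contra hnot
  exact this.2 (backstepAt_foldl_unpack.2 ⟨hnot, hb _ hu⟩)

theorem activates_foldl_unpack_toList (hc : c.IsContributor) (hC : C ∈ G.circles c.i1)
    (hCn : C ∉ G.activeCircles c) : G.Activates c (C.toList.foldl G.unpack c) := by
  have hsub : insert C (G.activeCircles c) ⊆ G.circles (G.tails c) :=
    insert_subset hC (activeCircles_subset c)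
  have hb := forall_backstepAt_of_not_mem_activeCircles hc hC hCn
  rw [foldl_unpack_toList hc]
  refine ⟨hc, isContributor_ofCircles hsub, C.toList,
    unpackSeqOK_of_forall_backstepAt (nodup_toList C) fun v hv => hb v (mem_toList.1 hv),
    foldl_unpack_toList hc, ?_, ?_⟩
  · rw [tc_eq (isContributor_ofCircles hsub), tc_eq hc, activeCircles_ofCircles hsub,
      card_insert_of_notMem hCn]
  · intro l hpre hne hneq hq
    obtain ⟨v, hv⟩ := List.exists_mem_of_ne_nil l hne
    have hCl := subset_of_isContributor_foldl_unpack hC hb hq hv (mem_toList.1 (hpre.subset hv))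
    have hlen : l.length < #C := by
      rw [← length_toList]
      exact lt_of_le_of_ne hpre.length_le fun h => hneq (hpre.eq_of_length h)
    have := card_le_card (fun u hu => List.mem_toFinset.2 (hCl u hu)) |>.trans
      (List.toFinset_card_le l)
    omega

theorem not_exists_activates_iff (hc : c.IsContributor) :
    (¬ ∃ d, G.Activates c d) ↔ G.activeCircles c = G.circles c.i1 := by
  constructor
  · intro hmax
    by_contra hne
    obtain ⟨C, hC, hCn⟩ := exists_of_ssubset ((activeCircles_subset c).ssubset_of_ne hne)
    exact hmax ⟨_, activates_foldl_unpack_toList hc hC hCn⟩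
  · rintro heq ⟨d, hact⟩
    obtain ⟨hi1, hsub⟩ := hact.mono
    have hAc : G.activeCircles d = G.activeCircles c :=
      ((activeCircles_subset d).trans (by rw [hi1, heq])).antisymm hsub
    obtain ⟨-, hd, -, -, -, htc, -⟩ := hact
    rw [tc_eq hd, tc_eq hc, hAc] at htc
    omega

theorem pc_eq_zero_of_allCirclesNegative (hd : d.IsContributor)
    (hneg : G.AllCirclesNegative d.i1) : pc d = 0 := by
  rw [pc_eq hd, card_eq_zero, filter_eq_empty_iff]
  exact fun C hC => by rw [hneg C (activeCircles_subset d hC)]; norm_num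

theorem pc_eq_zero_iff (hsgn : ∀ i, G.sgn i = 1 ∨ G.sgn i = -1) (hc : c.IsContributor)
    (hmax : ¬ ∃ d, G.Activates c d) : pc c = 0 ↔ G.AllCirclesNegative c.i1 := by
  refine ⟨fun h C hC => ?_, pc_eq_zero_of_allCirclesNegative hc⟩
  rw [pc_eq hc, card_eq_zero, filter_eq_empty_iff, (not_exists_activates_iff hc).1 hmax] at h
  exact (circleSign_eq_one_or hsgn C).resolve_left (h hC)

theorem isMaxOfNegClass_iff (hsgn : ∀ i, G.sgn i = 1 ∨ G.sgn i = -1) :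
    G.IsMaxOfNegClass c ↔
      ∃ f : G.Tails, G.AllCirclesNegative f ∧ G.ofCircles f (G.circles f) = c := by
  constructor
  · rintro ⟨hc, hmax, hpc⟩
    refine ⟨G.tails c, (pc_eq_zero_iff hsgn hc hmax).1 (hpc c (Or.inl .refl)), ?_⟩
    change G.ofCircles (G.tails c) (G.circles c.i1) = c
    rw [← (not_exists_activates_iff hc).1 hmax, ofCircles_activeCircles hc]
  · rintro ⟨f, hneg, rfl⟩
    have hc := isContributor_ofCircles (subset_refl (G.circles f))
    have hmax := (not_exists_activates_iff hc).2 (activeCircles_ofCircles subset_rfl)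
    refine ⟨hc, hmax, fun d hcd => ?_⟩
    rcases hcd with hcd | hdc
    · rcases Relation.ReflTransGen.cases_head hcd with rfl | ⟨x, hact, -⟩
      exacts [pc_eq_zero_of_allCirclesNegative hc hneg, absurd ⟨x, hact⟩ hmax]
    · exact pc_eq_zero_of_allCirclesNegative (isContributor_of_leA hdc hc)
        ((leA.mono hdc).1 ▸ hneg)

theorem finsum_isMaxOfNegClass (hsgn : ∀ i, G.sgn i = 1 ∨ G.sgn i = -1) :
    (∑ᶠ c ∈ {c | G.IsMaxOfNegClass c}, (2 : ℤ) ^ nc c) =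
      ∑ f ∈ univ.filter (fun f : G.Tails => G.AllCirclesNegative f), 2 ^ #(G.circles f) := by
  have hset : {c | G.IsMaxOfNegClass c} =
      ↑((univ.filter fun f : G.Tails => G.AllCirclesNegative f).image
        fun f => G.ofCircles f (G.circles f)) := by
    ext c
    rw [Set.mem_ofPred_eq, isMaxOfNegClass_iff hsgn, coe_image, Set.mem_image]
    simp only [coe_filter, mem_univ, true_and, Set.mem_ofPred_eq]
  rw [hset, finsum_mem_coe_finset, sum_image fun f _ g _ h =>
    Subtype.ext (congrArg PreContributor.i1 h)]
  refine sum_congr rfl fun f hf => ?_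
  have hsub := subset_refl (G.circles f)
  rw [nc_eq (isContributor_ofCircles hsub), activeCircles_ofCircles hsub]
  change 2 ^ #((G.circles f).filter fun C => G.circleSign f C = -1) = _
  rw [filter_true_of_mem (mem_filter.1 hf).2]

theorem forall_one_le_pc_iff (hsgn : ∀ i, G.sgn i = 1 ∨ G.sgn i = -1) :
    (∀ c : PreContributor G.toOrientedHypergraph, c.IsContributor →
        (¬ ∃ d, G.Activates c d) → 1 ≤ pc c) ↔
      ∀ f : G.Tails, ¬ G.AllCirclesNegative f := by
  constructor
  · intro h f hneg
    have hsub := subset_refl (G.circles f)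
    have hc := isContributor_ofCircles hsub
    have := h _ hc ((not_exists_activates_iff hc).2 (activeCircles_ofCircles hsub))
    rw [pc_eq_zero_of_allCirclesNegative hc hneg] at this
    omega
  · intro h c hc hmax
    by_contra hlt
    exact h (G.tails c) ((pc_eq_zero_iff hsgn hc hmax).1 (by omega))

end Bidirected

open PreContributor in
theorem det_lap_maximal_contributors_general {V : Type} [Fintype V] [DecidableEq V]
    (G : Bidirected V) (hsgn : ∀ i, G.sgn i = 1 ∨ G.sgn i = -1) :
    G.toOrientedHypergraph.lap.det =
      (∑ᶠ c ∈ {c : PreContributor G.toOrientedHypergraph | c.IsContributor ∧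
          (¬ ∃ d, G.Activates c d) ∧ ∀ d, G.ActEq c d → pc d = 0},
        (2 : ℤ) ^ nc c) ∧
    0 ≤ G.toOrientedHypergraph.lap.det ∧
    (G.toOrientedHypergraph.lap.det = 0 ↔
      ∀ c : PreContributor G.toOrientedHypergraph, c.IsContributor →
        (¬ ∃ d, G.Activates c d) → 1 ≤ pc c) := by
  rw [G.det_lap_eq hsgn, G.forall_one_le_pc_iff hsgn,
    sum_eq_zero_iff_of_nonneg fun _ _ => by positivity]
  refine ⟨(G.finsum_isMaxOfNegClass hsgn).symm, sum_nonneg fun _ _ => by positivity, ?_⟩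
  simp

open PreContributor in
/-- For a signed graph `G` (a bidirected graph via an orientation,
each of whose connected components contains an adjacency),
`det(L_G) = ∑_{c ∈ M⁻} 2^{nc(c)}` where `M⁻` is the set of maximal elements of the
positive-circle-free activation classes of contributors of `G` and `nc(c)` is the
number of negative circles of `c`.  In particular `det(L_G) ≥ 0`, and
`det(L_G) = 0` iff every activation class contains a positive circle in its
maximal element. -/
theorem det_lap_maximal_contributors {V : Type} [Fintype V] [DecidableEq V]
    (G : Bidirected V) (hsgn : ∀ i, G.sgn i = 1 ∨ G.sgn i = -1)
    (hG : G.EveryComponentHasAdjacency) :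
    G.toOrientedHypergraph.lap.det =
      (∑ᶠ c ∈ {c : PreContributor G.toOrientedHypergraph | c.IsContributor ∧
          (¬ ∃ d, G.Activates c d) ∧ ∀ d, G.ActEq c d → pc d = 0},
        (2 : ℤ) ^ nc c) ∧
    0 ≤ G.toOrientedHypergraph.lap.det ∧
    (G.toOrientedHypergraph.lap.det = 0 ↔
      ∀ c : PreContributor G.toOrientedHypergraph, c.IsContributor →
        (¬ ∃ d, G.Activates c d) → 1 ≤ pc c) :=
  det_lap_maximal_contributors_general G hsgn
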